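/- arXiv:2406.04889 — 3 statements merged into one kernel-verified Lean document; each statement's English description precedes it below -/
import Mathlib

section
/- If (u⋆, d⋆) is an optimal clearing with net position ω₀ > 0 and there exists a feasible u with Σ u(n) = ω₀ (i.e., the target is attainable by upward bids alone), then d⋆ = 0, i.e., no downward bids are cleared. (Part of Lemma 1 of the paper.) -/
open Finset

/-!
Suppose some downward bid is cleared. Scaling the upward part of the clearing by
`t = ω₀ / ∑ u⋆ < 1` and dropping all downward bids gives another clearing with net position `ω₀`.
It saves `(1 - t) ∑ cᵘ u⋆ ≥ min cᵘ · ∑ d⋆` on upward bids and loses the downward revenue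
`∑ cᵈ d⋆ < min cᵘ · ∑ d⋆`, so it is strictly cheaper, contradicting optimality.
-/

section WeightedSum

variable {ι : Type*} [Fintype ι] {c x : ι → ℝ} {m : ℝ}

lemma mul_sum_le_sum_mul_of_le (hc : ∀ i, m ≤ c i) (hx : ∀ i, 0 ≤ x i) :
    m * ∑ i, x i ≤ ∑ i, c i * x i := by
  rw [mul_sum]
  exact sum_le_sum fun i _ => mul_le_mul_of_nonneg_right (hc i) (hx i)

lemma sum_mul_lt_mul_sum_of_lt (hc : ∀ i, c i < m) (hx : ∀ i, 0 ≤ x i)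
    (hpos : ∃ i, 0 < x i) : ∑ i, c i * x i < m * ∑ i, x i := by
  obtain ⟨j, hj⟩ := hpos
  rw [mul_sum]
  exact sum_lt_sum (fun i _ => mul_le_mul_of_nonneg_right (hc i).le (hx i))
    ⟨j, mem_univ j, mul_lt_mul_of_pos_right (hc j) hj⟩

end WeightedSum

lemma scaled_upward_cost_lt {U D : Type*} [Fintype U] [Fintype D] {cu : U → ℝ} {cd : D → ℝ}
    (hprice : ∀ n k, cd k < cu n) {u : U → ℝ} {d : D → ℝ} (hu : ∀ n, 0 ≤ u n)
    (hd : ∀ k, 0 ≤ d k) (hdpos : ∃ k, 0 < d k) {ω₀ : ℝ} (hS : 0 < ∑ n, u n)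
    (hω : ∑ n, u n - ∑ k, d k = ω₀) :
    ∑ n, cu n * (ω₀ / (∑ n, u n) * u n) < ∑ n, cu n * u n - ∑ k, cd k * d k := by
  set S := ∑ n, u n
  set t := ω₀ / S
  obtain ⟨n₀, -, hn₀⟩ := exists_min_image univ cu (nonempty_of_sum_ne_zero hS.ne')
  have hdown : ∑ k, cd k * d k < cu n₀ * ∑ k, d k :=
    sum_mul_lt_mul_sum_of_lt (fun k => hprice n₀ k) hd hdpos
  have hup : cu n₀ * S ≤ ∑ n, cu n * u n :=
    mul_sum_le_sum_mul_of_le (fun n => hn₀ n (mem_univ n)) hu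
  have hsaved : ∑ k, d k = (1 - t) * S := by
    rw [sub_mul, one_mul, div_mul_cancel₀ ω₀ hS.ne']
    linarith
  have hsaved_nonneg : 0 ≤ 1 - t := by
    have : 0 ≤ ∑ k, d k := sum_nonneg fun k _ => hd k
    rw [hsaved] at this
    exact nonneg_of_mul_nonneg_left this hS
  calc ∑ n, cu n * (t * u n) = t * ∑ n, cu n * u n := by
        rw [mul_sum]; exact sum_congr rfl fun n _ => mul_left_comm _ _ _
    _ = ∑ n, cu n * u n - (1 - t) * ∑ n, cu n * u n := by ring
    _ ≤ ∑ n, cu n * u n - cu n₀ * ∑ k, d k := by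
        rw [hsaved, mul_left_comm]
        exact sub_le_sub_left (mul_le_mul_of_nonneg_left hup hsaved_nonneg) _
    _ < ∑ n, cu n * u n - ∑ k, cd k * d k := sub_lt_sub_left hdown _

theorem no_downward_cleared_general {U D : Type*} [Fintype U] [Fintype D]
    (cu : U → ℝ) (cd : D → ℝ) (umax : U → ℝ) (dmax : D → ℝ)
    (hdmax : ∀ n, 0 ≤ dmax n)
    (hprice : ∀ (n : U) (k : D), cd k < cu n)
    (ω₀ : ℝ) (hω₀ : 0 < ω₀)
    (ustar : U → ℝ) (dstar : D → ℝ)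
    (hufeas : ∀ n, 0 ≤ ustar n ∧ ustar n ≤ umax n)
    (hdfeas : ∀ n, 0 ≤ dstar n ∧ dstar n ≤ dmax n)
    (hω : ∑ n, ustar n - ∑ n, dstar n = ω₀)
    (hopt : ∀ (u : U → ℝ) (d : D → ℝ),
      (∀ n, 0 ≤ u n ∧ u n ≤ umax n) → (∀ n, 0 ≤ d n ∧ d n ≤ dmax n) →
      ∑ n, u n - ∑ n, d n = ω₀ →
      ∑ n, cu n * ustar n - ∑ n, cd n * dstar n ≤
        ∑ n, cu n * u n - ∑ n, cd n * d n) :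
    dstar = 0 := by
  by_contra hne
  obtain ⟨k, hk⟩ := Function.ne_iff.mp hne
  have hdpos : ∃ k, 0 < dstar k := ⟨k, lt_of_le_of_ne (hdfeas k).1 (Ne.symm hk)⟩
  have hω₀_le : ω₀ ≤ ∑ n, ustar n := by
    have := sum_nonneg fun k (_ : k ∈ univ) => (hdfeas k).1
    linarith
  have hS : 0 < ∑ n, ustar n := hω₀.trans_le hω₀_le
  set t := ω₀ / ∑ n, ustar n
  have ht₀ : 0 ≤ t := div_nonneg hω₀.le hS.le
  have ht₁ : t ≤ 1 := div_le_one_of_le₀ hω₀_le hS.le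
  have hscaled_feas : ∀ n, 0 ≤ t * ustar n ∧ t * ustar n ≤ umax n := fun n =>
    ⟨mul_nonneg ht₀ (hufeas n).1, (mul_le_of_le_one_left (hufeas n).1 ht₁).trans (hufeas n).2⟩
  have hscaled_net : ∑ n, t * ustar n - ∑ _k : D, (0 : ℝ) = ω₀ := by
    rw [← mul_sum, div_mul_cancel₀ ω₀ hS.ne', sum_const_zero, sub_zero]
  have hle := hopt _ 0 hscaled_feas (fun k => ⟨le_rfl, hdmax k⟩) hscaled_net
  have hlt := scaled_upward_cost_lt hprice (fun n => (hufeas n).1) (fun k => (hdfeas k).1)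
    hdpos hS hω
  simp only [Pi.zero_apply, mul_zero, sum_const_zero, sub_zero] at hle
  linarith

/-- In the abstract market clearing with positive upward prices c^u,
positive downward prices c^d satisfying max c^d < min c^u, if (u⋆, d⋆) is an
optimal clearing with net position ω₀ > 0 and the target is attainable by upward
bids alone, then no downward bids are cleared: d⋆ = 0. -/
theorem no_downward_cleared {U D : Type*} [Fintype U] [Fintype D]
    (cu : U → ℝ) (cd : D → ℝ) (umax : U → ℝ) (dmax : D → ℝ)
    (hcu : ∀ n, 0 < cu n) (hcd : ∀ n, 0 < cd n)
    (humax : ∀ n, 0 ≤ umax n) (hdmax : ∀ n, 0 ≤ dmax n)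
    (hprice : ∀ (n : U) (k : D), cd k < cu n)
    (ω₀ : ℝ) (hω₀ : 0 < ω₀)
    (ustar : U → ℝ) (dstar : D → ℝ)
    (hufeas : ∀ n, 0 ≤ ustar n ∧ ustar n ≤ umax n)
    (hdfeas : ∀ n, 0 ≤ dstar n ∧ dstar n ≤ dmax n)
    (hω : ∑ n, ustar n - ∑ n, dstar n = ω₀)
    (hopt : ∀ (u : U → ℝ) (d : D → ℝ),
      (∀ n, 0 ≤ u n ∧ u n ≤ umax n) → (∀ n, 0 ≤ d n ∧ d n ≤ dmax n) →
      ∑ n, u n - ∑ n, d n = ω₀ →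
      ∑ n, cu n * ustar n - ∑ n, cd n * dstar n ≤
        ∑ n, cu n * u n - ∑ n, cd n * d n)
    (hattain : ∃ u : U → ℝ, (∀ n, 0 ≤ u n ∧ u n ≤ umax n) ∧ ∑ n, u n = ω₀) :
    dstar = 0 :=
  no_downward_cleared_general cu cd umax dmax hdmax hprice ω₀ hω₀ ustar dstar hufeas hdfeas hω hopt
end

section
/- If (u⋆, d⋆) is an optimal clearing with net position ω₀ < 0 and there exists a feasible d with Σ d(n) = −ω₀, then u⋆ = 0, i.e., no upward bids are cleared. (Part of Lemma 1 of the paper.) -/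
/-!
If an upward bid `n` and a downward bid `k` were both cleared, lowering both by the same
`ε > 0` would keep the net position and save `(c^u(n) - c^d(k)) ε > 0`, contradicting
optimality. A downward bid is always cleared, because `ω₀ < 0`.
-/

open Finset

section
variable {ι R : Type*} [DecidableEq ι]

lemma sub_pi_single_mem_box [AddCommGroup R] [PartialOrder R] [IsOrderedAddMonoid R]
    {x b : ι → R} (hx : ∀ m, 0 ≤ x m ∧ x m ≤ b m) {n : ι} {ε : R}
    (hε₀ : 0 ≤ ε) (hε : ε ≤ x n) (m : ι) :
    0 ≤ (x - Pi.single n ε : ι → R) m ∧ (x - Pi.single n ε : ι → R) m ≤ b m := by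
  rcases eq_or_ne m n with rfl | hm
  · simp only [Pi.sub_apply, Pi.single_eq_same]
    exact ⟨sub_nonneg.mpr hε, (sub_le_self _ hε₀).trans (hx m).2⟩
  · simpa only [Pi.sub_apply, Pi.single_eq_of_ne hm, sub_zero] using hx m

variable [Fintype ι]

lemma sum_sub_pi_single [AddCommGroup R] (x : ι → R) (n : ι) (ε : R) :
    ∑ m, (x - Pi.single n ε : ι → R) m = ∑ m, x m - ε := by
  simp only [Pi.sub_apply, sum_sub_distrib, sum_pi_single', mem_univ, if_true]

lemma sum_mul_sub_pi_single [NonUnitalNonAssocRing R] (c x : ι → R) (n : ι) (ε : R) :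
    ∑ m, c m * (x - Pi.single n ε : ι → R) m = ∑ m, c m * x m - c n * ε := by
  simp only [Pi.sub_apply, mul_sub, sum_sub_distrib, ← Pi.single_mul_right_apply,
    sum_pi_single', mem_univ, if_true]

end

theorem no_upward_cleared_general {U D : Type*} [Fintype U] [Fintype D]
    (cu : U → ℝ) (cd : D → ℝ) (umax : U → ℝ) (dmax : D → ℝ)
    (hprice : ∀ (n : U) (k : D), cd k < cu n)
    (ω₀ : ℝ) (hω₀ : ω₀ < 0)
    (ustar : U → ℝ) (dstar : D → ℝ)
    (hufeas : ∀ n, 0 ≤ ustar n ∧ ustar n ≤ umax n)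
    (hdfeas : ∀ n, 0 ≤ dstar n ∧ dstar n ≤ dmax n)
    (hω : ∑ n, ustar n - ∑ n, dstar n = ω₀)
    (hopt : ∀ (u : U → ℝ) (d : D → ℝ),
      (∀ n, 0 ≤ u n ∧ u n ≤ umax n) → (∀ n, 0 ≤ d n ∧ d n ≤ dmax n) →
      ∑ n, u n - ∑ n, d n = ω₀ →
      ∑ n, cu n * ustar n - ∑ n, cd n * dstar n ≤
        ∑ n, cu n * u n - ∑ n, cd n * d n) :
    ustar = 0 := by
  classical
  by_contra hne
  obtain ⟨-, n, hn⟩ := Pi.lt_def.mp (lt_of_le_of_ne (fun m => (hufeas m).1) (Ne.symm hne))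
  have hd : ∑ m, (0 : D → ℝ) m < ∑ m, dstar m := by
    simp only [Pi.zero_apply, sum_const_zero]
    linarith [sum_nonneg fun m (_ : m ∈ univ) => (hufeas m).1]
  obtain ⟨k, -, hk⟩ := exists_lt_of_sum_lt hd
  set ε := min (ustar n) (dstar k)
  have hε : 0 < ε := lt_min hn hk
  have hcost := hopt (ustar - Pi.single n ε) (dstar - Pi.single k ε)
    (sub_pi_single_mem_box hufeas hε.le (min_le_left _ _))
    (sub_pi_single_mem_box hdfeas hε.le (min_le_right _ _))
    (by rw [sum_sub_pi_single, sum_sub_pi_single]; linarith)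
  rw [sum_mul_sub_pi_single, sum_mul_sub_pi_single] at hcost
  linarith [mul_lt_mul_of_pos_right (hprice n k) hε]

/-- In the abstract market clearing with price condition
max c^d < min c^u, if (u⋆, d⋆) is an optimal clearing with net position ω₀ < 0
and the target is attainable by downward bids alone, then no upward bids are
cleared: u⋆ = 0. -/
theorem no_upward_cleared {U D : Type*} [Fintype U] [Fintype D]
    (cu : U → ℝ) (cd : D → ℝ) (umax : U → ℝ) (dmax : D → ℝ)
    (hcu : ∀ n, 0 < cu n) (hcd : ∀ n, 0 < cd n)
    (humax : ∀ n, 0 ≤ umax n) (hdmax : ∀ n, 0 ≤ dmax n)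
    (hprice : ∀ (n : U) (k : D), cd k < cu n)
    (ω₀ : ℝ) (hω₀ : ω₀ < 0)
    (ustar : U → ℝ) (dstar : D → ℝ)
    (hufeas : ∀ n, 0 ≤ ustar n ∧ ustar n ≤ umax n)
    (hdfeas : ∀ n, 0 ≤ dstar n ∧ dstar n ≤ dmax n)
    (hω : ∑ n, ustar n - ∑ n, dstar n = ω₀)
    (hopt : ∀ (u : U → ℝ) (d : D → ℝ),
      (∀ n, 0 ≤ u n ∧ u n ≤ umax n) → (∀ n, 0 ≤ d n ∧ d n ≤ dmax n) →
      ∑ n, u n - ∑ n, d n = ω₀ →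
      ∑ n, cu n * ustar n - ∑ n, cd n * dstar n ≤
        ∑ n, cu n * u n - ∑ n, cd n * d n)
    (hattain : ∃ d : D → ℝ, (∀ n, 0 ≤ d n ∧ d n ≤ dmax n) ∧ ∑ n, d n = -ω₀) :
    ustar = 0 :=
  no_upward_cleared_general cu cd umax dmax hprice ω₀ hω₀ ustar dstar hufeas hdfeas hω hopt
end

section
/- If (u⋆, d⋆) is an optimal clearing with net position 0, then u⋆ = 0 and d⋆ = 0. (Part of Lemma 1 of the paper: when the net flexibility position is zero, no bids are cleared.) -/
/-!
When the cleared volumes balance, `∑ u = ∑ d = S`, the price condition gives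
`∑ cd d ≤ (max cd) * S < ∑ cu u` as soon as `S > 0`, so a nonempty balanced clearing has positive
cost. Clearing nothing is feasible at cost `0`, so an optimal balanced clearing has `S = 0`, and
nonnegativity forces `u⋆ = 0` and `d⋆ = 0`.
-/

open Finset

section

variable {ι κ : Type*} [Fintype ι] [Fintype κ]

theorem mul_sum_lt_sum_mul_of_lt {a : ℝ} {c w : ι → ℝ} (hc : ∀ i, a < c i) (hw : 0 ≤ w)
    (hpos : 0 < ∑ i, w i) : a * ∑ i, w i < ∑ i, c i * w i := by
  obtain ⟨j, -, hj⟩ := exists_lt_of_sum_lt (by simpa using hpos : ∑ _i : ι, (0 : ℝ) < ∑ i, w i)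
  rw [mul_sum]
  exact sum_lt_sum (fun i _ => mul_le_mul_of_nonneg_right (hc i).le (hw i))
    ⟨j, mem_univ j, mul_lt_mul_of_pos_right (hc j) hj⟩

theorem sum_eq_zero_of_balanced_of_cost_nonpos {cu : ι → ℝ} {cd : κ → ℝ}
    (hprice : ∀ i k, cd k < cu i) {u : ι → ℝ} {d : κ → ℝ} (hu : 0 ≤ u) (hd : 0 ≤ d)
    (hbal : ∑ i, u i = ∑ k, d k) (hcost : ∑ i, cu i * u i ≤ ∑ k, cd k * d k) :
    ∑ i, u i = 0 := by
  by_contra hne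
  have hpos : 0 < ∑ i, u i := (sum_nonneg fun i _ => hu i).lt_of_ne' hne
  obtain ⟨b, -, hb⟩ := exists_max_image univ cd (nonempty_of_sum_ne_zero (hbal ▸ hne))
  have : ∑ k, cd k * d k < ∑ i, cu i * u i :=
    calc ∑ k, cd k * d k ≤ cd b * ∑ k, d k := by
          rw [mul_sum]
          exact sum_le_sum fun k _ => mul_le_mul_of_nonneg_right (hb k (mem_univ k)) (hd k)
      _ = cd b * ∑ i, u i := by rw [hbal]
      _ < ∑ i, cu i * u i := mul_sum_lt_sum_mul_of_lt (fun i => hprice i b) hu hpos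
  linarith

end

theorem no_bids_cleared_zero_position_general {U D : Type*} [Fintype U] [Fintype D]
    (cu : U → ℝ) (cd : D → ℝ) (umax : U → ℝ) (dmax : D → ℝ)
    (humax : ∀ n, 0 ≤ umax n) (hdmax : ∀ n, 0 ≤ dmax n)
    (hprice : ∀ (n : U) (k : D), cd k < cu n)
    (ustar : U → ℝ) (dstar : D → ℝ)
    (hufeas : ∀ n, 0 ≤ ustar n ∧ ustar n ≤ umax n)
    (hdfeas : ∀ n, 0 ≤ dstar n ∧ dstar n ≤ dmax n)
    (hω : ∑ n, ustar n - ∑ n, dstar n = 0)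
    (hopt : ∀ (u : U → ℝ) (d : D → ℝ),
      (∀ n, 0 ≤ u n ∧ u n ≤ umax n) → (∀ n, 0 ≤ d n ∧ d n ≤ dmax n) →
      ∑ n, u n - ∑ n, d n = 0 →
      ∑ n, cu n * ustar n - ∑ n, cd n * dstar n ≤
        ∑ n, cu n * u n - ∑ n, cd n * d n) :
    ustar = 0 ∧ dstar = 0 := by
  have hu : 0 ≤ ustar := fun n => (hufeas n).1
  have hd : 0 ≤ dstar := fun n => (hdfeas n).1
  have hcost := hopt 0 0 (fun n => ⟨le_rfl, humax n⟩) (fun n => ⟨le_rfl, hdmax n⟩) (by simp)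
  simp only [Pi.zero_apply, mul_zero, sum_const_zero, sub_zero] at hcost
  have hU : ∑ n, ustar n = 0 := sum_eq_zero_of_balanced_of_cost_nonpos hprice hu hd
    (sub_eq_zero.mp hω) (sub_nonpos.mp hcost)
  have hD : ∑ n, dstar n = 0 := by linarith
  exact ⟨(Fintype.sum_eq_zero_iff_of_nonneg hu).mp hU, (Fintype.sum_eq_zero_iff_of_nonneg hd).mp hD⟩

/-- In the abstract market clearing with price condition
max c^d < min c^u, if (u⋆, d⋆) is an optimal clearing with net position 0,
then u⋆ = 0 and d⋆ = 0: no bids are cleared. -/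
theorem no_bids_cleared_zero_position {U D : Type*} [Fintype U] [Fintype D]
    (cu : U → ℝ) (cd : D → ℝ) (umax : U → ℝ) (dmax : D → ℝ)
    (hcu : ∀ n, 0 < cu n) (hcd : ∀ n, 0 < cd n)
    (humax : ∀ n, 0 ≤ umax n) (hdmax : ∀ n, 0 ≤ dmax n)
    (hprice : ∀ (n : U) (k : D), cd k < cu n)
    (ustar : U → ℝ) (dstar : D → ℝ)
    (hufeas : ∀ n, 0 ≤ ustar n ∧ ustar n ≤ umax n)
    (hdfeas : ∀ n, 0 ≤ dstar n ∧ dstar n ≤ dmax n)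
    (hω : ∑ n, ustar n - ∑ n, dstar n = 0)
    (hopt : ∀ (u : U → ℝ) (d : D → ℝ),
      (∀ n, 0 ≤ u n ∧ u n ≤ umax n) → (∀ n, 0 ≤ d n ∧ d n ≤ dmax n) →
      ∑ n, u n - ∑ n, d n = 0 →
      ∑ n, cu n * ustar n - ∑ n, cd n * dstar n ≤
        ∑ n, cu n * u n - ∑ n, cd n * d n) :
    ustar = 0 ∧ dstar = 0 :=
  no_bids_cleared_zero_position_general cu cd umax dmax humax hdmax hprice ustar dstar hufeas hdfeas
    hω hopt
end
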